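/- Generalization of Theorem 5 to several intervening commutative operations: suppose o is an operation, L is a list of operations each of which is commutative with o, and o⁻¹ is an inverse operation of o. Then for any two schedules α and β, viewEquiv (α ++ o :: (L ++ [o⁻¹] ++ β)) (α ++ L ++ β); that is, executing o, then the operations of L in order, then o's inverse, is view equivalent to executing only the operations of L. -/

import Mathlib

/-- Run a schedule (list of data operations) on a storage state, returning the final state. -/
def run {σ V : Type*} : List (σ → σ × V) → σ → σ
  | [], s => s
  | o :: P, s => run P ((o s).1)

/-- The return-value trace of a schedule started in a given state. -/
def trace {σ V : Type*} : List (σ → σ × V) → σ → List V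
  | [], _ => []
  | o :: P, s => (o s).2 :: trace P ((o s).1)

/-- View equivalence of schedules: in any context, all future operations return identical values. -/
def viewEquiv {σ V : Type*} (S S' : List (σ → σ × V)) : Prop :=
  ∀ (A P : List (σ → σ × V)) (s : σ),
    trace P (run (A ++ S) s) = trace P (run (A ++ S') s)

/-- Two operations are non-conflicting if both execution orders agree on final state
and on both operations' return values, from every state. -/
def nonConflicting {σ V : Type*} (p q : σ → σ × V) : Prop :=
  ∀ s : σ,
    (q ((p s).1)).1 = (p ((q s).1)).1 ∧
    (p s).2 = (p ((q s).1)).2 ∧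
    (q s).2 = (q ((p s).1)).2

/-- Two operations are commutative if swapping them in any context preserves view equivalence. -/
def commutative {σ V : Type*} (o o' : σ → σ × V) : Prop :=
  ∀ (α β : List (σ → σ × V)), viewEquiv (α ++ [o, o'] ++ β) (α ++ [o', o] ++ β)

/-- `oinv` is an inverse operation of `o`. -/
def inverseOp {σ V : Type*} (o oinv : σ → σ × V) : Prop :=
  ∀ (α β : List (σ → σ × V)), viewEquiv (α ++ β) (α ++ [o, oinv] ++ β)


theorem ve_symm {σ V : Type*} {S S' : List (σ → σ × V)} (h : viewEquiv S S') :
    viewEquiv S' S := fun A P s => (h A P s).symm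

theorem ve_trans {σ V : Type*} {S S' S'' : List (σ → σ × V)}
    (h : viewEquiv S S') (h' : viewEquiv S' S'') : viewEquiv S S'' :=
  fun A P s => (h A P s).trans (h' A P s)

/-- Generalization of Theorem 5: o, then a list L of operations each commutative with o,
then o's inverse, is view equivalent to executing only L. -/
theorem abort_via_inverse_many {σ V : Type*} (o oinv : σ → σ × V)
    (L : List (σ → σ × V))
    (hcomm : ∀ x ∈ L, commutative o x) (hinv : inverseOp o oinv)
    (α β : List (σ → σ × V)) :
    viewEquiv (α ++ o :: (L ++ [oinv] ++ β)) (α ++ L ++ β) := by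
  induction L generalizing α with
  | nil =>
      have h := ve_symm (hinv α β)
      simpa using h
  | cons x L ih =>
      have h1 := hcomm x List.mem_cons_self α (L ++ [oinv] ++ β)
      have h2 := ih (fun y hy => hcomm y (List.mem_cons_of_mem _ hy)) (α ++ [x])
      simp only [List.append_assoc, List.cons_append, List.nil_append] at h1 h2 ⊢
      exact ve_trans h1 h2
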